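/- Let f : ℝⁿ → ℝ be a C^2 function and let a ∈ ℝⁿ be a nondegenerate critical point of f. Then a is a C^1-stable critical point of f: for every μ > 0 there exists δ > 0 such that every C^1 function h : ℝⁿ → ℝ satisfying sup_{|x−a| ≤ μ} ( |f(x) − h(x)| + |∇f(x) − ∇h(x)| ) ≤ δ has at least one critical point q with |q − a| < μ. -/

import Mathlib

/-!
Let `A` be the Hessian of `f` at `a`. Since `∇f x = A (x - a) + o(‖x - a‖)`, the map
`x ↦ x - A⁻¹ (∇h x)` sends a small closed ball around `a` into itself as soon as `∇h` is uniformly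
close to `∇f` there, and Brouwer's fixed point theorem gives a zero of `∇h` in that ball.

For Brouwer's theorem, a fixed-point-free self-map of the closed unit ball `B`
is smoothed by convolution and then turned into a `C¹` map `r` from a neighbourhood of `B` to the
unit sphere that fixes the sphere. For small `t`, `x ↦ x + t • (r x - x)` maps `B` injectively onto
itself with positive Jacobian, so `∫ x in B, det (1 + t • (Dr x - 1))` is the volume of `B`. Being a
polynomial in `t`, this integral is still the volume of `B` at `t = 1`, whereas `det (Dr x) = 0`
because `r` takes values in the sphere.
-/

open Function Set Metric Filter Topology MeasureTheory Polynomial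
open scoped RealInnerProductSpace Convolution ContDiff

theorem Polynomial.exists_integral_eval_eq_eval {α : Type*} [MeasurableSpace α] {μ : Measure α}
    {n : ℕ} (p : α → ℝ[X]) (hdeg : ∀ x, (p x).natDegree ≤ n)
    (hint : ∀ t, Integrable (fun x => (p x).eval t) μ) :
    ∃ P : ℝ[X], ∀ t, ∫ x, (p x).eval t ∂μ = P.eval t := by
  let s := Finset.range (n + 1)
  let v : ℕ → ℝ := Nat.cast
  have hv : Set.InjOn v s := Nat.cast_injective.injOn
  have hlt : ∀ x, (p x).degree < s.card := fun x => by
    rw [Finset.card_range, Nat.cast_succ]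
    exact (degree_le_of_natDegree_le (hdeg x)).trans_lt (WithBot.coe_lt_coe.2 n.lt_succ_self)
  refine ⟨Lagrange.interpolate s v fun i => ∫ x, (p x).eval (v i) ∂μ, fun t => ?_⟩
  -- Lagrange interpolation at the nodes `0, …, n` is exact in degree `≤ n`.
  have hp : ∀ x, (p x).eval t = ∑ i ∈ s, (p x).eval (v i) * (Lagrange.basis s v i).eval t :=
    fun x => by
      conv_lhs => rw [Lagrange.eq_interpolate hv (hlt x)]
      simp [Lagrange.interpolate_apply, eval_finsetSum]
  simp_rw [hp]
  rw [integral_finsetSum _ fun i _ => (hint (v i)).mul_const _]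
  simp [Lagrange.interpolate_apply, eval_finsetSum, integral_mul_const]

theorem LinearMap.exists_det_one_add_smul_eq_eval {K V : Type*} [Field K] [AddCommGroup V]
    [Module K V] [FiniteDimensional K V] (L : V →ₗ[K] V) :
    ∃ p : K[X], p.natDegree ≤ Module.finrank K V ∧ ∀ t, (1 + t • L).det = p.eval t := by
  let b := Module.finBasis K V
  let M := LinearMap.toMatrix b b L
  refine ⟨((X : K[X]) • M.map C + (1 : Matrix _ _ K).map C).det, ?_, fun t => ?_⟩
  · simpa using natDegree_det_X_add_C_le M 1
  · rw [← LinearMap.det_toMatrix b, ← coe_evalRingHom, RingHom.map_det]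
    congr 1
    ext i j
    by_cases h : i = j <;> simp [M, h] <;> ring

theorem ContinuousLinearMap.exists_integral_det_one_add_smul_eq_eval {α : Type*}
    [MeasurableSpace α] {μ : Measure α} {E : Type*} [NormedAddCommGroup E] [NormedSpace ℝ E]
    [FiniteDimensional ℝ E] (L : α → E →L[ℝ] E)
    (hint : ∀ t : ℝ, Integrable (fun x => (1 + t • L x).det) μ) :
    ∃ P : ℝ[X], ∀ t, ∫ x, (1 + t • L x).det ∂μ = P.eval t := by
  choose p hdeg hp using fun x => (L x : E →ₗ[ℝ] E).exists_det_one_add_smul_eq_eval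
  have hdet : ∀ t x, (1 + t • L x).det = (p x).eval t := fun t x => by
    rw [← hp]; rfl
  simp_rw [hdet] at hint ⊢
  exact Polynomial.exists_integral_eval_eq_eval p hdeg hint

theorem isUnit_one_add_of_norm_lt_one {R : Type*} [NormedRing R] [HasSummableGeomSeries R] {x : R}
    (hx : ‖x‖ < 1) : IsUnit (1 + x) := by
  have := (Units.oneSub (-x) (by rwa [norm_neg])).isUnit
  rwa [Units.val_oneSub, sub_neg_eq_add] at this

theorem ContinuousLinearMap.det_one_add_pos_of_norm_lt_one {E : Type*} [NormedAddCommGroup E]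
    [NormedSpace ℝ E] [FiniteDimensional ℝ E] (L : E →L[ℝ] E) (hL : ‖L‖ < 1) : 0 < (1 + L).det := by
  have hne : ∀ s ∈ Icc (0 : ℝ) 1, (1 + s • L).det ≠ 0 := fun s hs => by
    have hsL : ‖s • L‖ < 1 := by
      rw [norm_smul, Real.norm_of_nonneg hs.1]
      exact (mul_le_of_le_one_left (norm_nonneg L) hs.2).trans_lt hL
    exact (LinearMap.isUnit_det _ ((isUnit_one_add_of_norm_lt_one hsL).map
      ContinuousLinearMap.toLinearMapRingHom)).ne_zero
  have hcont : ContinuousOn (fun s : ℝ => (1 + s • L).det) (Icc 0 1) :=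
    (ContinuousLinearMap.continuous_det.comp (by fun_prop)).continuousOn
  by_contra! hle
  obtain ⟨s, hs, hs0⟩ := isPreconnected_Icc.intermediate_value (right_mem_Icc.2 zero_le_one)
    (left_mem_Icc.2 zero_le_one) hcont ⟨by simpa using hle, by simp [ContinuousLinearMap.det]⟩
  exact hne s hs hs0

theorem isOpen_image_of_hasStrictFDerivAt {E F : Type*} [NormedAddCommGroup E] [NormedSpace ℝ E]
    [CompleteSpace E] [NormedAddCommGroup F] [NormedSpace ℝ F] [CompleteSpace F] {f : E → F}
    {f' : E → E →L[ℝ] F} {s : Set E} (hs : IsOpen s)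
    (hf : ∀ x ∈ s, HasStrictFDerivAt f (f' x) x) (hsurj : ∀ x ∈ s, (f' x).range = ⊤) :
    IsOpen (f '' s) := by
  rw [isOpen_iff_mem_nhds]
  rintro _ ⟨x, hx, rfl⟩
  rw [← (hf x hx).map_nhds_eq_of_surj (hsurj x hx)]
  exact image_mem_map (hs.mem_nhds hx)

section NormedSpace

variable {E : Type*} [NormedAddCommGroup E] [NormedSpace ℝ E]

theorem image_closedBall_eq_of_isOpen_image [ProperSpace E] {f : E → E} {c : E} {R : ℝ}
    (hf : ContinuousOn f (closedBall c R)) (hopen : IsOpen (f '' ball c R))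
    (hball : MapsTo f (ball c R) (ball c R)) (hsphere : EqOn f id (sphere c R)) :
    f '' closedBall c R = closedBall c R := by
  have hclosed : IsClosed (f '' closedBall c R) :=
    ((isCompact_closedBall c R).image_of_continuousOn hf).isClosed
  -- `f '' ball c R` is open and closed in the connected set `ball c R`.
  have hsub : ball c R ⊆ f '' ball c R := by
    rcases (ball c R).eq_empty_or_nonempty with hempty | ⟨x, hx⟩
    · simp [hempty]
    refine (convex_ball c R).isPreconnected.subset_of_closure_inter_subset hopen
      ⟨f x, hball hx, mem_image_of_mem f hx⟩ ?_
    rintro _ ⟨hy, hyR⟩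
    obtain ⟨x, hx, rfl⟩ := closure_minimal (image_mono ball_subset_closedBall) hclosed hy
    rw [← ball_union_sphere] at hx
    rcases hx with hx | hx
    · exact mem_image_of_mem f hx
    · rw [hsphere hx] at hyR
      exact absurd (mem_sphere.1 hx) (mem_ball.1 hyR).ne
  rw [← ball_union_sphere, image_union, hsphere.image_eq_self,
    hsub.antisymm' (image_subset_iff.2 hball)]

theorem injOn_add_smul_of_lipschitzOnWith {u : E → E} {s : Set E} {C : NNReal} {t : ℝ}
    (hu : LipschitzOnWith C u s) (ht : 0 ≤ t) (htC : t * C < 1) :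
    InjOn (fun x => x + t • u x) s := by
  intro x hx y hy hxy
  have hdiff : x - y = t • (u y - u x) := by
    rw [smul_sub]; linear_combination (norm := module) hxy
  have hle : ‖x - y‖ ≤ t * C * ‖x - y‖ := calc
    ‖x - y‖ = t * ‖u y - u x‖ := by rw [hdiff, norm_smul, Real.norm_of_nonneg ht]
    _ ≤ t * (C * ‖y - x‖) := by gcongr; exact hu.norm_sub_le hy hx
    _ = t * C * ‖x - y‖ := by rw [norm_sub_rev]; ring
  by_contra hne
  have := norm_pos_iff.2 (sub_ne_zero.2 hne)
  nlinarith

theorem norm_add_smul_sub_lt_one {x y : E} {t : ℝ} (hx : ‖x‖ < 1) (hy : ‖y‖ ≤ 1)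
    (ht : t ∈ Ico (0 : ℝ) 1) : ‖x + t • (y - x)‖ < 1 := calc
  ‖x + t • (y - x)‖ = ‖(1 - t) • x + t • y‖ := by congr 1; module
  _ ≤ (1 - t) * ‖x‖ + t * ‖y‖ := by
    refine (norm_add_le _ _).trans_eq ?_
    rw [norm_smul, norm_smul, Real.norm_of_nonneg (by linarith [ht.2]), Real.norm_of_nonneg ht.1]
  _ < 1 := by nlinarith [ht.1, ht.2]

end NormedSpace

section InnerProductSpace

variable {E : Type*} [NormedAddCommGroup E] [InnerProductSpace ℝ E]

/-- `x + sphereExitParam x d • d` is where the ray from `x` in direction `d` meets the unit sphere: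
the larger root `λ` of `‖x + λ • d‖ = 1`. -/
noncomputable def sphereExitParam (x d : E) : ℝ :=
  (-⟪x, d⟫ + √(⟪x, d⟫ ^ 2 + (1 - ‖x‖ ^ 2) * ‖d‖ ^ 2)) / ‖d‖ ^ 2

theorem norm_add_sphereExitParam_smul {x d : E} (hd : d ≠ 0)
    (hdisc : 0 ≤ ⟪x, d⟫ ^ 2 + (1 - ‖x‖ ^ 2) * ‖d‖ ^ 2) :
    ‖x + sphereExitParam x d • d‖ = 1 := by
  have hb : 0 < ‖d‖ ^ 2 := by positivity
  have hs := Real.sq_sqrt hdisc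
  have hsq : ‖x + sphereExitParam x d • d‖ ^ 2 = 1 := by
    rw [norm_add_sq_real, norm_smul, inner_smul_right, mul_pow, Real.norm_eq_abs, sq_abs,
      sphereExitParam]
    field_simp
    linear_combination hs
  exact (pow_eq_one_iff_of_nonneg (norm_nonneg _) two_ne_zero).1 hsq

theorem sphereExitParam_eq_zero {x d : E} (hx : ‖x‖ = 1) (hxd : 0 ≤ ⟪x, d⟫) :
    sphereExitParam x d = 0 := by
  simp [sphereExitParam, hx, Real.sqrt_sq hxd]

theorem ContDiffAt.sphereExitParam {n : WithTop ℕ∞} {x d : E → E} {z : E}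
    (hx : ContDiffAt ℝ n x z) (hd : ContDiffAt ℝ n d z) (hd0 : d z ≠ 0)
    (hdisc : 0 < ⟪x z, d z⟫ ^ 2 + (1 - ‖x z‖ ^ 2) * ‖d z‖ ^ 2) :
    ContDiffAt ℝ n (fun y => sphereExitParam (x y) (d y)) z := by
  have hxd := hx.inner ℝ hd
  have hdisc' : ContDiffAt ℝ n (fun y => ⟪x y, d y⟫ ^ 2 + (1 - ‖x y‖ ^ 2) * ‖d y‖ ^ 2) z :=
    (hxd.pow 2).add ((contDiffAt_const.sub (hx.norm_sq ℝ)).mul (hd.norm_sq ℝ))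
  exact (hxd.neg.add (hdisc'.sqrt hdisc.ne')).div (hd.norm_sq ℝ) (by positivity)

theorem norm_sub_sq_le_two_mul_inner {x y : E} (hx : ‖x‖ = 1) (hy : ‖y‖ ≤ 1) :
    ‖x - y‖ ^ 2 ≤ 2 * ⟪x, x - y⟫ := by
  rw [norm_sub_sq_real, inner_sub_right, real_inner_self_eq_norm_sq, hx]
  nlinarith [norm_nonneg y]

variable [FiniteDimensional ℝ E]

theorem HasFDerivAt.det_eq_zero_of_norm_eventuallyEq {r : E → E} {r' : E →L[ℝ] E} {x : E}
    (hr : HasFDerivAt r r' x) (hnorm : ∀ᶠ y in 𝓝 x, ‖r y‖ = ‖r x‖) (hx : r x ≠ 0) :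
    r'.det = 0 := by
  have hconst : HasFDerivAt (fun y => ‖r y‖ ^ 2) (0 : E →L[ℝ] ℝ) x :=
    (hasFDerivAt_const (‖r x‖ ^ 2) x).congr_of_eventuallyEq (hnorm.mono fun y hy => by simp [hy])
  have horth : ∀ v, ⟪r x, r' v⟫ = 0 := fun v => by
    simpa using congrArg (· v) (hr.norm_sq.unique hconst)
  by_contra hdet
  have hsurj : Function.Surjective r' := ((Module.End.isUnit_iff _).1
    ((LinearMap.isUnit_iff_isUnit_det _).2 (isUnit_iff_ne_zero.2 hdet))).2
  obtain ⟨v, hv⟩ := hsurj (r x)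
  exact hx (inner_self_eq_zero.1 (hv ▸ horth v))

theorem measureReal_closedBall_eq_integral_det_of_mul_lt_one [MeasurableSpace E] [BorelSpace E]
    (μ : Measure E) [μ.IsAddHaarMeasure] {r : E → E} {U : Set E} (hU : IsOpen U)
    (hBU : closedBall 0 1 ⊆ U) (hr : ContDiffOn ℝ 1 r U)
    (hmaps : MapsTo r (closedBall 0 1) (closedBall 0 1)) (hid : EqOn r id (sphere 0 1))
    {C : NNReal} (hC : ∀ x ∈ closedBall 0 1, ‖fderiv ℝ r x - 1‖₊ ≤ C) {t : ℝ}
    (ht : t ∈ Ico (0 : ℝ) 1) (htC : t * C < 1) :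
    μ.real (closedBall 0 1) = ∫ x in closedBall 0 1, (1 + t • (fderiv ℝ r x - 1)).det ∂μ := by
  set B : Set E := closedBall 0 1
  have hderiv : ∀ x ∈ U, HasStrictFDerivAt r (fderiv ℝ r x) x := fun x hx =>
    (hr.contDiffAt (hU.mem_nhds hx)).hasStrictFDerivAt one_ne_zero
  have hsmall : ∀ x ∈ B, ‖t • (fderiv ℝ r x - 1)‖ < 1 := fun x hx => by
    rw [norm_smul, Real.norm_of_nonneg ht.1]
    exact (mul_le_mul_of_nonneg_left (show ‖fderiv ℝ r x - 1‖ ≤ C from hC x hx) ht.1).trans_lt htC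
  set f : E → E := fun x => x + t • (r x - x)
  have hf : ∀ x ∈ U, HasStrictFDerivAt f (1 + t • (fderiv ℝ r x - 1)) x := fun x hx =>
    (hasStrictFDerivAt_id x).add (((hderiv x hx).sub (hasStrictFDerivAt_id x)).const_smul t)
  have hinj : InjOn f B := injOn_add_smul_of_lipschitzOnWith
    ((convex_closedBall 0 1).lipschitzOnWith_of_nnnorm_hasFDerivWithin_le
      (fun x hx => ((hderiv x (hBU hx)).hasFDerivAt.sub (hasFDerivAt_id x)).hasFDerivWithinAt) hC)
    ht.1 htC
  have himage : f '' B = B := by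
    refine image_closedBall_eq_of_isOpen_image ?_ ?_ ?_ fun x hx => by simp [f, hid hx]
    · exact fun x hx => (hf x (hBU hx)).hasFDerivAt.continuousAt.continuousWithinAt
    · refine isOpen_image_of_hasStrictFDerivAt isOpen_ball
        (fun x hx => hf x (hBU (ball_subset_closedBall hx))) fun x hx => ?_
      exact LinearMap.range_eq_top.2 ((Module.End.isUnit_iff _).1 ((isUnit_one_add_of_norm_lt_one
        (hsmall x (ball_subset_closedBall hx))).map ContinuousLinearMap.toLinearMapRingHom)).2
    · intro x hx
      rw [mem_ball_zero_iff] at hx ⊢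
      exact norm_add_smul_sub_lt_one hx
        (mem_closedBall_zero_iff.1 (hmaps (ball_subset_closedBall (mem_ball_zero_iff.2 hx)))) ht
  have hcov := integral_image_eq_integral_abs_det_fderiv_smul μ measurableSet_closedBall
    (fun x hx => (hf x (hBU hx)).hasFDerivAt.hasFDerivWithinAt) hinj (fun _ => (1 : ℝ))
  rw [himage] at hcov
  calc μ.real B = ∫ _ in B, (1 : ℝ) ∂μ := by rw [setIntegral_const, smul_eq_mul, mul_one]
    _ = _ := hcov
    _ = _ := setIntegral_congr_fun measurableSet_closedBall fun x hx => by
      rw [smul_eq_mul, mul_one,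
        abs_of_pos ((t • (fderiv ℝ r x - 1)).det_one_add_pos_of_norm_lt_one (hsmall x hx))]

theorem exists_forall_measureReal_closedBall_eq_integral_det [MeasurableSpace E] [BorelSpace E]
    (μ : Measure E) [μ.IsAddHaarMeasure] {r : E → E} {U : Set E} (hU : IsOpen U)
    (hBU : closedBall 0 1 ⊆ U) (hr : ContDiffOn ℝ 1 r U)
    (hmaps : MapsTo r (closedBall 0 1) (closedBall 0 1)) (hid : EqOn r id (sphere 0 1)) :
    ∃ t₀ > (0 : ℝ), ∀ t ∈ Ioc 0 t₀,
      μ.real (closedBall 0 1) = ∫ x in closedBall 0 1, (1 + t • (fderiv ℝ r x - 1)).det ∂μ := by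
  obtain ⟨C, hC⟩ : ∃ C : NNReal, ∀ x ∈ closedBall (0 : E) 1, ‖fderiv ℝ r x - 1‖₊ ≤ C := by
    obtain ⟨C, hC⟩ := (isCompact_closedBall (0 : E) 1).exists_bound_of_continuousOn
      (((hr.continuousOn_fderiv_of_isOpen hU le_rfl).sub continuousOn_const).mono hBU)
    exact ⟨C.toNNReal, fun x hx => by
      rw [← NNReal.coe_le_coe, coe_nnnorm]; exact (hC x hx).trans C.le_coe_toNNReal⟩
  refine ⟨1 / ((C : ℝ) + 2), by positivity, fun t ht => ?_⟩
  refine measureReal_closedBall_eq_integral_det_of_mul_lt_one μ hU hBU hr hmaps hid hC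
    ⟨ht.1.le, ht.2.trans_lt (by rw [div_lt_one (by positivity)]; linarith [C.2])⟩ ?_
  calc t * C ≤ 1 / ((C : ℝ) + 2) * C := by gcongr; exact ht.2
    _ < 1 := by rw [div_mul_eq_mul_div, one_mul, div_lt_one (by positivity)]; linarith

theorem ContDiffOn.not_eqOn_sphere_of_norm_eq_one {r : E → E} {U : Set E} (hU : IsOpen U)
    (hBU : closedBall 0 1 ⊆ U) (hr : ContDiffOn ℝ 1 r U) (hnorm : ∀ x ∈ U, ‖r x‖ = 1) :
    ¬EqOn r id (sphere (0 : E) 1) := by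
  intro hid
  borelize E
  set B : Set E := closedBall 0 1
  let μ : Measure E := Measure.addHaar
  obtain ⟨t₀, ht₀, hvol⟩ := exists_forall_measureReal_closedBall_eq_integral_det μ hU hBU hr
    (fun x hx => mem_closedBall_zero_iff.2 (hnorm x (hBU hx)).le) hid
  have hDr : ContinuousOn (fderiv ℝ r) B := (hr.continuousOn_fderiv_of_isOpen hU le_rfl).mono hBU
  obtain ⟨P, hP⟩ := ContinuousLinearMap.exists_integral_det_one_add_smul_eq_eval
    (μ := μ.restrict B) (fun x => fderiv ℝ r x - 1) fun t =>
      (ContinuousLinearMap.continuous_det.comp_continuousOn (by fun_prop)).integrableOn_compact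
        (isCompact_closedBall 0 1)
  have hPconst : P = C (μ.real B) := eq_of_infinite_eval_eq _ _ <|
    (Ioc_infinite ht₀).mono fun t ht => by
      rw [mem_ofPred_eq, eval_C, ← hP, hvol t ht]
  have hdet_zero : ∀ x ∈ B, (1 + (1 : ℝ) • (fderiv ℝ r x - 1)).det = 0 := fun x hx => by
    have hxU := hBU hx
    rw [one_smul, add_sub_cancel]
    refine ((hr.contDiffAt (hU.mem_nhds hxU)).differentiableAt one_ne_zero).hasFDerivAt
      |>.det_eq_zero_of_norm_eventuallyEq ?_ ?_
    · filter_upwards [hU.mem_nhds hxU] with y hy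
      rw [hnorm y hy, hnorm x hxU]
    · exact norm_ne_zero_iff.1 ((hnorm x hxU).trans_ne one_ne_zero)
  have := hP 1
  rw [hPconst, eval_C, setIntegral_eq_zero_of_forall_eq_zero hdet_zero] at this
  exact (ENNReal.toReal_pos (measure_closedBall_pos μ 0 one_pos).ne'
    measure_closedBall_lt_top.ne).ne' this.symm

theorem exists_fixedPoint_of_contDiff {g : E → E} (hg : ContDiff ℝ 1 g)
    (hmaps : MapsTo g (closedBall 0 1) (closedBall 0 1)) : ∃ x ∈ closedBall (0 : E) 1, g x = x := by
  by_contra! hfix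
  set disc : E → ℝ := fun x => ⟪x, x - g x⟫ ^ 2 + (1 - ‖x‖ ^ 2) * ‖x - g x‖ ^ 2
  set U : Set E := {x | x - g x ≠ 0} ∩ {x | 0 < disc x}
  have hsub : ∀ x ∈ closedBall (0 : E) 1, x - g x ≠ 0 := fun x hx => sub_ne_zero.2 (hfix x hx).symm
  have hinner : ∀ x ∈ sphere (0 : E) 1, 0 < ⟪x, x - g x⟫ := fun x hx => by
    have := norm_sub_sq_le_two_mul_inner (mem_sphere_zero_iff_norm.1 hx)
      (mem_closedBall_zero_iff.1 (hmaps (sphere_subset_closedBall hx)))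
    have := norm_pos_iff.2 (hsub x (sphere_subset_closedBall hx))
    nlinarith
  have hBU : closedBall 0 1 ⊆ U := by
    intro x hx
    refine ⟨hsub x hx, ?_⟩
    rcases (mem_closedBall_zero_iff.1 hx).lt_or_eq with hlt | heq
    · have := norm_pos_iff.2 (hsub x hx)
      have : 0 < 1 - ‖x‖ ^ 2 := by nlinarith [norm_nonneg x]
      show 0 < disc x
      positivity
    · have := hinner x (mem_sphere_zero_iff_norm.2 heq)
      simp only [disc, mem_ofPred_eq, heq]
      positivity
  have hU : IsOpen U :=
    (isOpen_ne_fun (by fun_prop) continuous_const).inter (isOpen_lt continuous_const (by fun_prop))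
  refine ContDiffOn.not_eqOn_sphere_of_norm_eq_one
    (r := fun x => x + sphereExitParam x (x - g x) • (x - g x)) hU hBU ?_
    (fun x hx => norm_add_sphereExitParam_smul hx.1 hx.2.le) fun x hx => ?_
  · intro x hx
    have hd : ContDiffAt ℝ 1 (fun y => y - g y) x := contDiffAt_id.sub hg.contDiffAt
    exact (contDiffAt_id.add ((contDiffAt_id.sphereExitParam hd hx.1 hx.2).smul hd))
      |>.contDiffWithinAt
  · simp [sphereExitParam_eq_zero (mem_sphere_zero_iff_norm.1 hx) (hinner x hx).le]

theorem Continuous.exists_contDiff_dist_le {F : Type*} [NormedAddCommGroup F] [NormedSpace ℝ F]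
    [CompleteSpace F] {G : E → F} (hG : Continuous G) {K : Set E} (hK : IsCompact K) {ε : ℝ}
    (hε : 0 < ε) : ∃ g : E → F, ContDiff ℝ ∞ g ∧ ∀ x ∈ K, dist (g x) (G x) ≤ ε := by
  borelize E
  obtain ⟨δ, hδ, hδG⟩ := Metric.mem_uniformity_dist.1 <| hK.uniformContinuousAt_of_continuousAt G
    (fun x _ => hG.continuousAt) (Metric.dist_mem_uniformity hε)
  let φ : ContDiffBump (0 : E) := ⟨δ / 2, δ, half_pos hδ, half_lt_self hδ⟩
  let μ : Measure E := Measure.addHaar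
  refine ⟨φ.normed μ ⋆[ContinuousLinearMap.lsmul ℝ ℝ, μ] G,
    φ.hasCompactSupport_normed.contDiff_convolution_left _ φ.contDiff_normed hG.locallyIntegrable,
    fun x hx => φ.dist_normed_convolution_le hG.aestronglyMeasurable fun y hy => ?_⟩
  rw [dist_comm]
  exact (hδG (mem_ball'.1 hy) hx).le

theorem exists_fixedPoint_of_continuousOn {g : E → E} (hg : ContinuousOn g (closedBall 0 1))
    (hmaps : MapsTo g (closedBall 0 1) (closedBall 0 1)) : ∃ x ∈ closedBall (0 : E) 1, g x = x := by
  set B : Set E := closedBall 0 1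
  by_contra! hfix
  obtain ⟨x₀, hx₀, hmin⟩ := (isCompact_closedBall (0 : E) 1).exists_isMinOn
    (nonempty_closedBall.2 zero_le_one)
    (continuous_dist.comp_continuousOn (hg.prodMk continuousOn_id))
  set ε := dist (g x₀) x₀
  have hε : 0 < ε := dist_pos.2 (hfix x₀ hx₀)
  have hε2 : ε ≤ 2 := (dist_le_norm_add_norm _ _).trans (by
    linarith [mem_closedBall_zero_iff.1 hx₀, mem_closedBall_zero_iff.1 (hmaps hx₀)])
  obtain ⟨G, hGB, hGg⟩ := ContinuousMap.exists_forall_mem_restrict_eq isClosed_closedBall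
    (⟨B.domRestrict g, hg.domRestrict⟩ : C(B, E)) (t := B) fun x => hmaps x.2
  have hGg' : ∀ x ∈ B, G x = g x := fun x hx => DFunLike.congr_fun hGg ⟨x, hx⟩
  -- Shrinking `G` by `1 - ε / 3` leaves room for a smoothing error of `ε / 3` inside `B`.
  obtain ⟨g₁, hg₁, hclose⟩ := (show Continuous fun x => (1 - ε / 3) • G x by fun_prop)
    |>.exists_contDiff_dist_le (isCompact_closedBall (0 : E) 1) (by positivity : 0 < ε / 3)
  have hshrink : ∀ x ∈ B, ‖(1 - ε / 3) • G x‖ ≤ 1 - ε / 3 := fun x hx => by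
    rw [norm_smul, Real.norm_of_nonneg (by linarith)]
    exact mul_le_of_le_one_right (by linarith) (mem_closedBall_zero_iff.1 (hGB x))
  obtain ⟨x, hx, hx_fix⟩ := exists_fixedPoint_of_contDiff (hg₁.of_le (by simp)) fun x hx => by
    rw [mem_closedBall_zero_iff]
    linarith [norm_le_norm_add_norm_sub' (g₁ x) ((1 - ε / 3) • G x), hshrink x hx,
      (dist_eq_norm (g₁ x) _).symm.trans_le (hclose x hx)]
  have hgG : dist (g x) ((1 - ε / 3) • G x) ≤ ε / 3 := by
    rw [← hGg' x hx, dist_eq_norm, show G x - (1 - ε / 3) • G x = (ε / 3) • G x by module,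
      norm_smul, Real.norm_of_nonneg (by positivity)]
    exact mul_le_of_le_one_right (by positivity) (mem_closedBall_zero_iff.1 (hGB x))
  have hεx : ε ≤ dist (g x) x := hmin hx
  have hG₁ := hclose x hx
  rw [hx_fix, dist_comm] at hG₁
  linarith [dist_triangle (g x) ((1 - ε / 3) • G x) x]

theorem exists_eq_zero_of_norm_sub_le {F : E → E} {a : E} {r : ℝ} (hr : 0 < r)
    (hF : ContinuousOn F (closedBall a r)) (hclose : ∀ x ∈ closedBall a r, ‖F x - (x - a)‖ ≤ r) :
    ∃ x ∈ closedBall a r, F x = 0 := by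
  have hT : MapsTo (fun y : E => a + r • y) (closedBall 0 1) (closedBall a r) := fun y hy => by
    rw [mem_closedBall_zero_iff] at hy
    rw [mem_closedBall_iff_norm, add_sub_cancel_left, norm_smul, Real.norm_of_nonneg hr.le]
    exact mul_le_of_le_one_right hr.le hy
  obtain ⟨y, hy, hfix⟩ := exists_fixedPoint_of_continuousOn (g := fun y => y - r⁻¹ • F (a + r • y))
    (continuousOn_id.sub ((hF.comp (by fun_prop) hT).const_smul _)) fun y hy => by
      have hFy := hclose _ (hT hy)
      rw [add_sub_cancel_left] at hFy
      have hy' : y - r⁻¹ • F (a + r • y) = r⁻¹ • -(F (a + r • y) - r • y) := by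
        rw [neg_sub, smul_sub, inv_smul_smul₀ hr.ne']
      beta_reduce
      rw [mem_closedBall_zero_iff, hy', norm_smul, norm_neg, norm_inv, Real.norm_of_nonneg hr.le]
      exact inv_mul_le_one_of_le₀ hFy hr.le
  refine ⟨a + r • y, hT hy, ?_⟩
  simpa [hr.ne'] using hfix

theorem HasFDerivAt.exists_pos_forall_exists_eq_zero {G : E → E} {A : E ≃L[ℝ] E} {a : E}
    (hG : HasFDerivAt G (A : E →L[ℝ] E) a) (hGa : G a = 0) {μ : ℝ} (hμ : 0 < μ) :
    ∃ δ > 0, ∀ H : E → E, ContinuousOn H (closedBall a μ) →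
      (∀ x ∈ closedBall a μ, ‖G x - H x‖ ≤ δ) → ∃ q ∈ ball a μ, H q = 0 := by
  set K := ‖(A.symm : E →L[ℝ] E)‖ + 1
  have hK : 0 < K := by positivity
  have hAK : ∀ y, ‖A.symm y‖ ≤ K * ‖y‖ := fun y =>
    ((A.symm : E →L[ℝ] E).le_opNorm y).trans (by gcongr; linarith)
  obtain ⟨ε, hε, hlin⟩ := Metric.eventually_nhds_iff.1 <|
    hG.isLittleO.def (by positivity : 0 < (2 * K)⁻¹)
  set r := min (ε / 2) (μ / 2)
  have hr : 0 < r := by positivity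
  refine ⟨r / (2 * K), by positivity, fun H hH hclose => ?_⟩
  have hrμ : r < μ := (min_le_right _ _).trans_lt (half_lt_self hμ)
  have hbound : ∀ x ∈ closedBall a r, ‖A.symm (H x) - (x - a)‖ ≤ r := fun x hx => by
    have hxr : ‖x - a‖ ≤ r := mem_closedBall_iff_norm.1 hx
    have hlin_x : ‖G x - A (x - a)‖ ≤ (2 * K)⁻¹ * ‖x - a‖ := by
      simpa [hGa] using hlin (mem_ball_iff_norm.2 (hxr.trans_lt
        ((min_le_left _ _).trans_lt (half_lt_self hε))))
    calc ‖A.symm (H x) - (x - a)‖ = ‖A.symm (H x - A (x - a))‖ := by simp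
      _ ≤ K * (‖G x - H x‖ + ‖G x - A (x - a)‖) := by
        refine (hAK _).trans (mul_le_mul_of_nonneg_left ?_ hK.le)
        exact (norm_sub_le_norm_sub_add_norm_sub _ (G x) _).trans_eq (by rw [norm_sub_rev])
      _ ≤ K * (r / (2 * K) + (2 * K)⁻¹ * r) := by
        gcongr
        · exact hclose x (closedBall_subset_closedBall hrμ.le hx)
        · exact hlin_x.trans (by gcongr)
      _ = r := by field_simp; ring
  obtain ⟨q, hq, hq0⟩ := exists_eq_zero_of_norm_sub_le hr
    (A.symm.continuous.comp_continuousOn (hH.mono (closedBall_subset_closedBall hrμ.le))) hbound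
  exact ⟨q, closedBall_subset_ball hrμ hq, by simpa using hq0⟩

end InnerProductSpace

theorem ContDiff.gradient {F : Type*} [NormedAddCommGroup F] [InnerProductSpace ℝ F]
    [CompleteSpace F] {f : F → ℝ} {n : WithTop ℕ∞} (hf : ContDiff ℝ (n + 1) f) :
    ContDiff ℝ n (gradient f) :=
  (InnerProductSpace.toDual ℝ F).symm.contDiff.comp (hf.fderiv_right le_rfl)

/-- A nondegenerate critical point `a` of a `C²` function `f : ℝⁿ → ℝ` is a
`C¹`-stable critical point: for every `μ > 0` there is `δ > 0` such that any `C¹`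
function `h` with `|f x - h x| + ‖∇f x - ∇h x‖ ≤ δ` on the ball of radius `μ` around
`a` has a critical point `q` with `‖q - a‖ < μ`. -/
theorem nondegenerate_critical_point_is_C1_stable {n : ℕ}
    (f : EuclideanSpace ℝ (Fin n) → ℝ) (hf : ContDiff ℝ 2 f)
    (a : EuclideanSpace ℝ (Fin n))
    (ha : gradient f a = 0)
    (hnd : Bijective (fderiv ℝ (gradient f) a)) :
    ∀ μ > (0 : ℝ), ∃ δ > (0 : ℝ),
      ∀ h : EuclideanSpace ℝ (Fin n) → ℝ, ContDiff ℝ 1 h →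
        (∀ x, ‖x - a‖ ≤ μ → |f x - h x| + ‖gradient f x - gradient h x‖ ≤ δ) →
        ∃ q, ‖q - a‖ < μ ∧ gradient h q = 0 := by
  intro μ hμ
  have hgrad : HasFDerivAt (gradient f) (fderiv ℝ (gradient f) a) a :=
    ((ContDiff.gradient (n := 1) hf).differentiable one_ne_zero a).hasFDerivAt
  obtain ⟨δ, hδ, hzero⟩ := HasFDerivAt.exists_pos_forall_exists_eq_zero
    (A := (LinearEquiv.ofBijective _ hnd).toContinuousLinearEquiv) hgrad ha hμ
  refine ⟨δ, hδ, fun h hh hclose => ?_⟩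
  obtain ⟨q, hq, hq0⟩ := hzero (gradient h) (ContDiff.gradient (n := 0) hh).continuous.continuousOn
    fun x hx => (le_add_of_nonneg_left (abs_nonneg _)).trans
      (hclose x (mem_closedBall_iff_norm.1 hx))
  exact ⟨q, mem_ball_iff_norm.1 hq, hq0⟩
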